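/- arXiv:2010.10745 — 2 statements merged into one kernel-verified Lean document; each statement's English description precedes it below -/
import Mathlib

section
/- Let $M$ be an $n \times n$ matrix over a commutative ring with $n \geq 2$. The coefficient of $t^{n-2}$ in the characteristic polynomial $\det(tI - M)$ equals $\sum_{1 \leq i < j \leq n} (M_{ii} M_{jj} - M_{ij} M_{ji})$. -/
open Finset Matrix Polynomial Equiv

-- pair extraction
lemma pair_eq_pair_iff {α : Type*} [LinearOrder α] [DecidableEq α] {a b c d : α} (hab : a < b) (hcd : c < d)
    (h : ({a, b} : Finset α) = {c, d}) : a = c ∧ b = d := by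
  have ha : a ∈ ({c, d} : Finset α) := h ▸ (by simp)
  have hb : b ∈ ({c, d} : Finset α) := h ▸ (by simp)
  have hc : c ∈ ({a, b} : Finset α) := h ▸ (by simp)
  have hd : d ∈ ({a, b} : Finset α) := h ▸ (by simp)
  simp only [Finset.mem_insert, Finset.mem_singleton] at ha hb hc hd
  rcases ha with rfl | rfl
  · rcases hb with rfl | rfl
    · exact absurd hab (lt_irrefl _)
    · exact ⟨rfl, rfl⟩
  · rcases hb with rfl | rfl
    · exact absurd (hab.trans hcd) (lt_irrefl _)
    · exact absurd hab (lt_irrefl _)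

lemma sum_pairs_powersetCard_two {α R : Type*} [Fintype α] [LinearOrder α] [DecidableEq α] [AddCommMonoid R]
    (g : Finset α → R) :
    ∑ i : α, ∑ j ∈ Finset.univ.filter (fun j => i < j), g {i, j}
      = ∑ t ∈ Finset.univ.powersetCard 2, g t := by
  classical
  rw [Finset.sum_sigma']
  refine Finset.sum_nbij (fun p => {p.1, p.2}) ?_ ?_ ?_ ?_
  · rintro ⟨a, b⟩ hab
    simp only [Finset.mem_sigma, Finset.mem_filter, Finset.mem_univ, true_and] at hab
    simp [Finset.mem_powersetCard, Finset.card_pair hab.ne]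
  · rintro ⟨a, b⟩ hab ⟨c, d⟩ hcd h
    simp only [Finset.coe_sigma, Set.mem_sigma_iff, Finset.mem_coe, Finset.mem_filter,
      Finset.mem_univ, true_and] at hab hcd
    obtain ⟨h1, h2⟩ := pair_eq_pair_iff hab hcd (by simpa using h)
    simp [h1, h2]
  · intro t ht
    simp only [Finset.mem_coe] at ht
    obtain ⟨a, b, hab, rfl⟩ := Finset.card_eq_two.mp (Finset.mem_powersetCard.mp ht).2
    rcases hab.lt_or_gt with h | h
    · exact ⟨⟨a, b⟩, by simp [h], rfl⟩
    · exact ⟨⟨b, a⟩, by simp [h], by simp [Finset.pair_comm]⟩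
  · intros; rfl

lemma sum_pairs_swaps {α R : Type*} [Fintype α] [LinearOrder α] [DecidableEq α] [AddCommMonoid R]
    [DecidablePred (Equiv.Perm.IsSwap : Equiv.Perm α → Prop)]
    (g : Equiv.Perm α → R) :
    ∑ i : α, ∑ j ∈ Finset.univ.filter (fun j => i < j), g (Equiv.swap i j)
      = ∑ σ ∈ Finset.univ.filter (fun σ : Equiv.Perm α => σ.IsSwap), g σ := by
  classical
  rw [Finset.sum_sigma']
  refine Finset.sum_nbij (fun p => Equiv.swap p.1 p.2) ?_ ?_ ?_ ?_
  · rintro ⟨a, b⟩ hab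
    simp only [Finset.mem_sigma, Finset.mem_filter, Finset.mem_univ, true_and] at hab
    simp only [Finset.mem_filter, Finset.mem_univ, true_and]
    exact ⟨a, b, hab.ne, rfl⟩
  · rintro ⟨a, b⟩ hab ⟨c, d⟩ hcd h
    simp only [Finset.coe_sigma, Set.mem_sigma_iff, Finset.mem_coe, Finset.mem_filter,
      Finset.mem_univ, true_and] at hab hcd
    have := congrArg Equiv.Perm.support h
    rw [Equiv.Perm.support_swap hab.ne, Equiv.Perm.support_swap hcd.ne] at this
    obtain ⟨h1, h2⟩ := pair_eq_pair_iff hab hcd this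
    simp [h1, h2]
  · intro σ hσ
    simp only [Finset.mem_coe, Finset.mem_filter, Finset.mem_univ, true_and] at hσ
    obtain ⟨a, b, hab, rfl⟩ := hσ
    rcases hab.lt_or_gt with h | h
    · exact ⟨⟨a, b⟩, by simp [h], rfl⟩
    · exact ⟨⟨b, a⟩, by simp [h], by rw [Equiv.swap_comm]⟩
  · intros; rfl

theorem stmt_3 (n : ℕ) (hn : 2 ≤ n) (R : Type*) [CommRing R]
    (M : Matrix (Fin n) (Fin n) R) :
    M.charpoly.coeff (n - 2) =
      ∑ i : Fin n, ∑ j ∈ Finset.univ.filter (fun j => i < j),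
        (M i i * M j j - M i j * M j i) := by
  classical
  have hcard : Fintype.card (Fin n) = n := Fintype.card_fin n
  -- coefficient of each permutation term
  -- main decomposition
  have key : M.charpoly.coeff (n - 2) =
      ∑ σ ∈ Finset.univ.filter
          (fun σ : Equiv.Perm (Fin n) => σ = 1 ∨ σ.IsSwap),
        (Polynomial.coeff (((Equiv.Perm.sign σ : ℤ) : Polynomial R) *
          ∏ i : Fin n, charmatrix M (σ i) i) (n - 2)) := by
    rw [Matrix.charpoly, Matrix.det_apply', Polynomial.finset_sum_coeff]
    symm
    apply Finset.sum_subset (Finset.subset_univ _)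
    intro σ _ hσ
    simp only [Finset.mem_filter, Finset.mem_univ, true_and, not_or] at hσ
    -- σ ≠ 1 and not a swap, so support has card ≥ 3
    have h3 : 3 ≤ σ.support.card := by
      rcases Nat.lt_or_ge σ.support.card 3 with h | h
      · interval_cases h' : σ.support.card
        · exact absurd (Equiv.Perm.support_eq_empty_iff.mp (Finset.card_eq_zero.mp h')) hσ.1
        · exact absurd h' (Equiv.Perm.card_support_ne_one σ)
        · exact absurd (Equiv.Perm.card_support_eq_two.mp h') hσ.2
      · exact h
    apply Polynomial.coeff_eq_zero_of_natDegree_lt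
    have hdeg : (((Equiv.Perm.sign σ : ℤ) : Polynomial R) *
          ∏ i : Fin n, charmatrix M (σ i) i).natDegree
        ≤ n - σ.support.card := by
      refine le_trans Polynomial.natDegree_mul_le ?_
      rw [Polynomial.natDegree_intCast, zero_add]
      refine le_trans (Polynomial.natDegree_prod_le _ _) ?_
      calc ∑ i : Fin n, (charmatrix M (σ i) i).natDegree
          ≤ ∑ i : Fin n, if σ i = i then 1 else 0 := by
            apply Finset.sum_le_sum
            intro i _
            exact Matrix.charmatrix_apply_natDegree_le _ _
        _ = (Finset.univ.filter (fun i => σ i = i)).card := by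
            simp [Finset.sum_boole]
        _ = n - σ.support.card := by
            have := Finset.card_filter_add_card_filter_not
              (s := (Finset.univ : Finset (Fin n))) (p := fun i => σ i = i)
            simp only [Finset.card_univ, hcard] at this
            have hs : σ.support = Finset.univ.filter (fun i => ¬ σ i = i) := by
              ext x; simp [Equiv.Perm.mem_support]
            have h2 : σ.support.card
                = (Finset.univ.filter (fun i => ¬ σ i = i)).card := by rw [hs]
            omega
    have hsn : σ.support.card ≤ n := by
      simpa [hcard] using Finset.card_le_univ σ.support
    refine lt_of_le_of_lt hdeg ?_
    exact Nat.sub_lt_sub_left (lt_of_lt_of_le (by norm_num) (le_trans h3 hsn)) (by omega)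
  rw [key]
  -- split off the identity
  have h1notswap : (1 : Equiv.Perm (Fin n)) ∉
      Finset.univ.filter (fun σ : Equiv.Perm (Fin n) => σ.IsSwap) := by
    simp only [Finset.mem_filter, Finset.mem_univ, true_and]
    rintro ⟨x, y, hxy, hxy'⟩
    exact hxy (Equiv.swap_eq_one_iff.mp hxy'.symm)
  have hsplit : Finset.univ.filter
      (fun σ : Equiv.Perm (Fin n) => σ = 1 ∨ σ.IsSwap)
      = insert 1 (Finset.univ.filter (fun σ : Equiv.Perm (Fin n) => σ.IsSwap)) := by
    ext σ
    simp [or_comm, eq_comm]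
  rw [hsplit, Finset.sum_insert h1notswap]
  -- identity term
  have hid : (Polynomial.coeff (((Equiv.Perm.sign (1 : Equiv.Perm (Fin n)) : ℤ) : Polynomial R) *
        ∏ i : Fin n, charmatrix M ((1 : Equiv.Perm (Fin n)) i) i) (n - 2))
      = ∑ i : Fin n, ∑ j ∈ Finset.univ.filter (fun j => i < j), M i i * M j j := by
    simp only [Equiv.Perm.sign_one, Units.val_one, Int.cast_one, one_mul, Equiv.Perm.coe_one,
      id_eq, Matrix.charmatrix_apply_eq]
    have hrw : ∏ i : Fin n, (X - Polynomial.C (M i i))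
        = ∏ i : Fin n, (X + Polynomial.C (-(M i i))) := by
      simp [sub_eq_add_neg]
    rw [hrw, Finset.prod_X_add_C_coeff _ _ (by rw [Finset.card_univ, hcard]; omega)]
    rw [show (Finset.univ : Finset (Fin n)).card - (n - 2) = 2 by rw [Finset.card_univ, hcard]; omega]
    rw [← sum_pairs_powersetCard_two (fun t => ∏ i ∈ t, -(M i i))]
    refine Finset.sum_congr rfl fun i _ => Finset.sum_congr rfl fun j hj => ?_
    simp only [Finset.mem_filter, Finset.mem_univ, true_and] at hj
    rw [Finset.prod_pair hj.ne, neg_mul_neg]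
  rw [hid]
  -- swap terms
  have hswap : ∀ i j : Fin n, i < j →
      (Polynomial.coeff (((Equiv.Perm.sign (Equiv.swap i j) : ℤ) : Polynomial R) *
        ∏ k : Fin n, charmatrix M (Equiv.swap i j k) k) (n - 2))
      = -(M i j * M j i) := by
    intro i j hij
    have hne : i ≠ j := hij.ne
    rw [Equiv.Perm.sign_swap hne]
    have hprodsplit : ∏ k : Fin n, charmatrix M (Equiv.swap i j k) k
        = (∏ k ∈ Finset.univ \ {i, j}, (X - Polynomial.C (M k k)))
          * Polynomial.C (M j i * M i j) := by
      rw [← Finset.prod_sdiff (Finset.subset_univ ({i, j} : Finset (Fin n)))]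
      congr 1
      · refine Finset.prod_congr rfl fun k hk => ?_
        simp only [Finset.mem_sdiff, Finset.mem_insert, Finset.mem_singleton, not_or] at hk
        rw [Equiv.swap_apply_of_ne_of_ne hk.2.1 hk.2.2, Matrix.charmatrix_apply_eq]
      · rw [Finset.prod_pair hne, Equiv.swap_apply_left, Equiv.swap_apply_right,
          Matrix.charmatrix_apply_ne _ _ _ hne.symm, Matrix.charmatrix_apply_ne _ _ _ hne,
          neg_mul_neg, ← Polynomial.C_mul]
    rw [hprodsplit]
    have hcardsd : (Finset.univ \ ({i, j} : Finset (Fin n))).card = n - 2 := by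
      rw [Finset.card_sdiff_of_subset (Finset.subset_univ _), Finset.card_pair hne, Finset.card_univ, hcard]
    have hco : (∏ k ∈ Finset.univ \ ({i, j} : Finset (Fin n)),
        (X - Polynomial.C (M k k))).coeff (n - 2) = 1 := by
      have hrw2 : ∏ k ∈ Finset.univ \ ({i, j} : Finset (Fin n)), (X - Polynomial.C (M k k))
          = ∏ k ∈ Finset.univ \ ({i, j} : Finset (Fin n)),
            (X + Polynomial.C (-(M k k))) := by
        simp [sub_eq_add_neg]
      rw [hrw2, Finset.prod_X_add_C_coeff _ _ (le_of_eq hcardsd.symm), hcardsd,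
        Nat.sub_self, Finset.powersetCard_zero]
      simp
    push_cast
    rw [neg_one_mul, Polynomial.coeff_neg, Polynomial.coeff_mul_C, hco, one_mul]
    ring
  have hsum : ∑ σ ∈ Finset.univ.filter (fun σ : Equiv.Perm (Fin n) => σ.IsSwap),
      (Polynomial.coeff (((Equiv.Perm.sign σ : ℤ) : Polynomial R) *
        ∏ k : Fin n, charmatrix M (σ k) k) (n - 2))
      = ∑ i : Fin n, ∑ j ∈ Finset.univ.filter (fun j => i < j), -(M i j * M j i) := by
    rw [← sum_pairs_swaps (fun σ => (Polynomial.coeff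
      (((Equiv.Perm.sign σ : ℤ) : Polynomial R) * ∏ k : Fin n, charmatrix M (σ k) k) (n - 2)))]
    refine Finset.sum_congr rfl fun i _ => Finset.sum_congr rfl fun j hj => ?_
    simp only [Finset.mem_filter, Finset.mem_univ, true_and] at hj
    exact hswap i j hj
  rw [hsum, ← Finset.sum_add_distrib]
  refine Finset.sum_congr rfl fun i _ => ?_
  rw [← Finset.sum_add_distrib]
  refine Finset.sum_congr rfl fun j _ => ?_
  ring
end

section
/- The cube of the Dedekind eta function (without the $q^{1/8}$ prefactor) has a sparse expansion: as formal power series over $\mathbb{Z}$, $\prod_{n=1}^{\infty} (1 - q^n)^3 = \sum_{k=0}^{\infty} (-1)^k (2k+1) q^{k(k+1)/2}$. -/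
open PowerSeries Finset
noncomputable section
abbrev Aq : Type := PowerSeries ℤ

def Pq (n : ℕ) : Aq := ∏ j ∈ Finset.range n, (1 - PowerSeries.X ^ (j+1))

lemma Pq_zero : Pq 0 = 1 := Finset.prod_range_zero _
lemma Pq_succ (n : ℕ) : Pq (n+1) = Pq n * (1 - X ^ (n+1)) := Finset.prod_range_succ _ _

lemma constantCoeff_Pq (n : ℕ) : PowerSeries.constantCoeff (R := ℤ) (Pq n) = 1 := by
  rw [Pq, map_prod]
  apply Finset.prod_eq_one
  intro j _
  simp

lemma isUnit_Pq (n : ℕ) : IsUnit (Pq n) := by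
  rw [PowerSeries.isUnit_iff_constantCoeff, constantCoeff_Pq]
  exact isUnit_one

lemma Pq_ne_zero (n : ℕ) : Pq n ≠ 0 := by
  intro h
  have := constantCoeff_Pq n
  rw [h, map_zero] at this
  exact zero_ne_one this

def Uq (n : ℕ) : Aqˣ := (isUnit_Pq n).unit

lemma Uq_val (n : ℕ) : (Uq n : Aq) = Pq n := (isUnit_Pq n).unit_spec

def qb (m k : ℕ) : Aq := if k ≤ m then (Uq m : Aq) * ((Uq k)⁻¹ : Aqˣ) * ((Uq (m - k))⁻¹ : Aqˣ) else 0

lemma qb_of_gt {m k : ℕ} (h : m < k) : qb m k = 0 := if_neg (by omega)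

lemma qb_mul {m k : ℕ} (h : k ≤ m) : qb m k * (Pq k * Pq (m - k)) = Pq m := by
  rw [qb, if_pos h, ← Uq_val, ← Uq_val, ← Uq_val]
  calc (Uq m : Aq) * ((Uq k)⁻¹ : Aqˣ) * ((Uq (m-k))⁻¹ : Aqˣ) * ((Uq k : Aq) * (Uq (m-k) : Aq))
      = (Uq m : Aq) * ((((Uq k)⁻¹ : Aqˣ) : Aq) * (Uq k : Aq)) * ((((Uq (m-k))⁻¹ : Aqˣ) : Aq) * (Uq (m-k) : Aq)) := by ring
    _ = (Uq m : Aq) := by rw [Units.inv_mul, Units.inv_mul, mul_one, mul_one]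

lemma qb_zero_right (m : ℕ) : qb m 0 = 1 := by
  have h := qb_mul (Nat.zero_le m)
  rw [Pq_zero, Nat.sub_zero, one_mul] at h
  exact mul_right_cancel₀ (Pq_ne_zero m) (by rw [h, one_mul])

lemma qb_self (m : ℕ) : qb m m = 1 := by
  have h := qb_mul (le_refl m)
  rw [Nat.sub_self, Pq_zero, mul_one] at h
  exact mul_right_cancel₀ (Pq_ne_zero m) (by rw [h, one_mul])

lemma qb_symm {m k : ℕ} (h : k ≤ m) : qb m (m - k) = qb m k := by
  rw [qb, qb, if_pos h, if_pos (Nat.sub_le m k), Nat.sub_sub_self h]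
  ring

lemma core2 (i j : ℕ) :
    qb (i+j+4) (i+2) = X^(i+2) * qb (i+j+2) (i+2) + (1 + X^(i+j+3)) * qb (i+j+2) (i+1)
      + X^(j+2) * qb (i+j+2) i := by
  have hZ : Pq (i+2) * Pq (j+2) ≠ 0 := mul_ne_zero (Pq_ne_zero _) (Pq_ne_zero _)
  apply mul_right_cancel₀ hZ
  have hL : qb (i+j+4) (i+2) * (Pq (i+2) * Pq (j+2)) = Pq (i+j+2) * ((1 - X^(i+j+3)) * (1 - X^(i+j+4))) := by
    have h := qb_mul (show i+2 ≤ i+j+4 by omega)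
    rw [show i+j+4 - (i+2) = j+2 by omega] at h
    rw [h, Pq_succ (i+j+3), Pq_succ (i+j+2)]
    ring_nf
  have h1 : qb (i+j+2) (i+2) * (Pq (i+2) * Pq (j+2)) = Pq (i+j+2) * ((1 - X^(j+1)) * (1 - X^(j+2))) := by
    have h := qb_mul (show i+2 ≤ i+j+2 by omega)
    rw [show i+j+2 - (i+2) = j by omega] at h
    rw [Pq_succ (j+1), Pq_succ j]
    linear_combination ((1 - (X:Aq)^(j+1)) * (1 - X^(j+2))) * h
  have h2 : qb (i+j+2) (i+1) * (Pq (i+2) * Pq (j+2)) = Pq (i+j+2) * ((1 - X^(i+2)) * (1 - X^(j+2))) := by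
    have h := qb_mul (show i+1 ≤ i+j+2 by omega)
    rw [show i+j+2 - (i+1) = j+1 by omega] at h
    rw [Pq_succ (i+1), Pq_succ (j+1)]
    linear_combination ((1 - (X:Aq)^(i+2)) * (1 - X^(j+2))) * h
  have h3 : qb (i+j+2) i * (Pq (i+2) * Pq (j+2)) = Pq (i+j+2) * ((1 - X^(i+1)) * (1 - X^(i+2))) := by
    have h := qb_mul (show i ≤ i+j+2 by omega)
    rw [show i+j+2 - i = j+2 by omega] at h
    rw [Pq_succ (i+1), Pq_succ i]
    linear_combination ((1 - (X:Aq)^(i+1)) * (1 - X^(i+2))) * h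
  rw [add_mul, add_mul]
  rw [show X^(i+2) * qb (i+j+2) (i+2) * (Pq (i+2) * Pq (j+2)) = X^(i+2) * (qb (i+j+2) (i+2) * (Pq (i+2) * Pq (j+2))) from by ring,
      show (1 + X^(i+j+3)) * qb (i+j+2) (i+1) * (Pq (i+2) * Pq (j+2)) = (1 + X^(i+j+3)) * (qb (i+j+2) (i+1) * (Pq (i+2) * Pq (j+2))) from by ring,
      show X^(j+2) * qb (i+j+2) i * (Pq (i+2) * Pq (j+2)) = X^(j+2) * (qb (i+j+2) i * (Pq (i+2) * Pq (j+2))) from by ring,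
      hL, h1, h2, h3]
  ring

lemma qb_two_one : qb 2 1 = 1 + X := by
  have hZ : Pq 1 * Pq 1 ≠ 0 := mul_ne_zero (Pq_ne_zero _) (Pq_ne_zero _)
  apply mul_right_cancel₀ hZ
  have h := qb_mul (show 1 ≤ 2 by omega)
  rw [show 2 - 1 = 1 by omega] at h
  rw [h, Pq_succ 1, Pq_succ 0, Pq_zero]
  ring

lemma core1 (n : ℕ) : qb (2*n+2) 1 = X * qb (2*n) 1 + (1 + X^(2*n+1)) := by
  cases n with
  | zero =>
      rw [show 2*0+2 = 2 by omega, show 2*0 = 0 by omega, qb_of_gt (show 0 < 1 by omega),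
        qb_two_one]
      ring_nf
  | succ r =>
      have hZ : Pq 1 * Pq (2*r+3) ≠ 0 := mul_ne_zero (Pq_ne_zero _) (Pq_ne_zero _)
      rw [show 2*(r+1)+2 = 2*r+4 by omega, show 2*(r+1)+1 = 2*r+3 by omega,
        show 2*(r+1) = 2*r+2 by omega]
      apply mul_right_cancel₀ hZ
      have hL := qb_mul (show 1 ≤ 2*r+4 by omega)
      rw [show 2*r+4-1 = 2*r+3 by omega] at hL
      have h1 := qb_mul (show 1 ≤ 2*r+2 by omega)
      rw [show 2*r+2-1 = 2*r+1 by omega] at h1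
      have e1 : Pq 1 = 1 - X := by rw [Pq_succ 0, Pq_zero, pow_one, one_mul]
      have e2 : Pq (2*r+2) = Pq (2*r+1) * (1 - X^(2*r+2)) := by
        have := Pq_succ (2*r+1); rwa [show 2*r+1+1 = 2*r+2 by omega] at this
      have e3 : Pq (2*r+3) = Pq (2*r+1) * ((1 - X^(2*r+2)) * (1 - X^(2*r+3))) := by
        have h' := Pq_succ (2*r+2)
        rw [show 2*r+2+1 = 2*r+3 by omega, e2] at h'
        rw [h']; ring
      have e4 : Pq (2*r+4) = Pq (2*r+1) * ((1 - X^(2*r+2)) * (1 - X^(2*r+3)) * (1 - X^(2*r+4))) := by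
        have h' := Pq_succ (2*r+3)
        rw [show 2*r+3+1 = 2*r+4 by omega, e3] at h'
        rw [h']; ring
      rw [hL, e4, e3, e1]
      rw [e2, e1] at h1
      linear_combination (-(X * (1 - (X:Aq)^(2*r+2)) * (1 - X^(2*r+3)))) * h1

def tq (j : ℕ) : ℕ := ∑ i ∈ Finset.range (j+1), i

lemma tq_succ (j : ℕ) : tq (j+1) = tq j + (j+1) := Finset.sum_range_succ _ _

lemma tq_eq (j : ℕ) : tq j = j * (j+1) / 2 := by
  rw [tq, Finset.sum_range_id]
  rcases j with _ | r
  · rfl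
  · rw [show r+1+1-1 = r+1 by omega]; rw [Nat.mul_comm]

lemma tq_ge (j : ℕ) : j ≤ tq j := by
  induction j with
  | zero => simp [tq]
  | succ r ih => rw [tq_succ]; omega

lemma tq_strictMono : StrictMono tq := by
  apply strictMono_nat_of_lt_succ
  intro n
  rw [tq_succ]; omega

def eq' (n k : ℕ) : ℕ := if n ≤ k then tq (k - n) else tq (n - k - 1)

lemma eL1 (n k : ℕ) : eq' (n+1) (k+1) = eq' n k := by
  rw [eq', eq']
  by_cases h : n ≤ k
  · rw [if_pos (by omega), if_pos h, show k+1-(n+1) = k - n by omega]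
  · rw [if_neg (by omega), if_neg h, show n+1-(k+1)-1 = n - k - 1 by omega]

lemma eL2 (n k : ℕ) : eq' n (k+1) + n = eq' n k + (k+1) := by
  rw [eq', eq']
  by_cases h : n ≤ k
  · rw [if_pos (by omega), if_pos h, show k+1-n = (k-n)+1 by omega, tq_succ]
    omega
  · by_cases h2 : n ≤ k + 1
    · rw [if_pos h2, if_neg h, show k+1-n = 0 by omega, show n-k-1 = 0 by omega]
      omega
    · rw [if_neg h2, if_neg h, show n-k-1 = (n-(k+1)-1)+1 by omega, tq_succ]
      omega

lemma eq'_zero_succ (n : ℕ) : eq' (n+1) 0 = eq' n 0 + n := by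
  rcases n with _ | r
  · simp [eq', tq]
  · rw [eq', eq', if_neg (by omega), if_neg (by omega),
      show r+1+1-0-1 = r+1 by omega, show r+1-0-1 = r by omega, tq_succ]

lemma eq'_add (n j : ℕ) : eq' n (n + j) = tq j := by
  rw [eq', if_pos (by omega), show n+j-n = j by omega]

lemma eq'_sub (n j : ℕ) (h : j + 1 ≤ n) : eq' n (n - 1 - j) = tq j := by
  rw [eq', if_neg (by omega), show n-(n-1-j)-1 = j by omega]

def cq (n k : ℕ) : Aq := qb (2*n) k * X ^ (eq' n k)

lemma cq_of_gt {n k : ℕ} (h : 2*n < k) : cq n k = 0 := by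
  rw [cq, qb_of_gt h, zero_mul]

lemma step0 (n : ℕ) : cq (n+1) 0 = X^n * cq n 0 := by
  rw [cq, cq, qb_zero_right, qb_zero_right, eq'_zero_succ, one_mul, one_mul, pow_add]
  ring

lemma step1 (n : ℕ) : cq (n+1) 1 = X^n * cq n 1 + (1 + X^(2*n+1)) * cq n 0 := by
  have h2 := eL2 n 0
  simp only [Nat.zero_add] at h2
  rw [cq, cq, cq, show 2*(n+1) = 2*n+2 by omega, eL1 n 0, qb_zero_right, one_mul]
  have hp : (X:Aq)^n * X^(eq' n 1) = X * X^(eq' n 0) := by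
    rw [← pow_add, show n + eq' n 1 = 1 + eq' n 0 by omega, pow_add, pow_one]
  linear_combination (X:Aq)^(eq' n 0) * core1 n - qb (2*n) 1 * hp

lemma step2 (n k : ℕ) :
    cq (n+1) (k+2) = X^n * cq n (k+2) + (1 + X^(2*n+1)) * cq n (k+1) + X^(n+1) * cq n k := by
  rcases lt_trichotomy (k+2) (2*n+1) with h | h | h
  · obtain ⟨j, hj⟩ : ∃ j, 2*n = k + j + 2 := ⟨2*n - k - 2, by omega⟩
    have key := core2 k j
    rw [show k+j+4 = 2*n+2 by omega, show k+j+3 = 2*n+1 by omega,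
      show k+j+2 = 2*n by omega] at key
    have h2 := eL2 n (k+1)
    rw [show k+1+1 = k+2 by omega] at h2
    have h3 := eL2 n k
    rw [cq, cq, cq, cq, show 2*(n+1) = 2*n+2 by omega, eL1 n (k+1), key]
    have hp1 : (X:Aq)^n * X^(eq' n (k+2)) = X^(k+2) * X^(eq' n (k+1)) := by
      rw [← pow_add, ← pow_add, show n + eq' n (k+2) = (k+2) + eq' n (k+1) by omega]
    have hp2 : (X:Aq)^(n+1) * X^(eq' n k) = X^(j+2) * X^(eq' n (k+1)) := by
      rw [← pow_add, ← pow_add, show (n+1) + eq' n k = (j+2) + eq' n (k+1) by omega]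
    linear_combination (- qb (2*n) (k+2)) * hp1 + (- qb (2*n) k) * hp2
  · obtain ⟨r, rfl⟩ : ∃ r, n = r + 1 := ⟨n - 1, by omega⟩
    have hk : k = 2*r+1 := by omega
    subst hk
    have c1 := core1 (r+1)
    rw [show 2*(r+1)+2 = 2*r+4 by omega, show 2*(r+1)+1 = 2*r+3 by omega,
      show 2*(r+1) = 2*r+2 by omega] at c1
    rw [cq, cq, cq, cq, show 2*(r+1+1) = 2*r+4 by omega, show 2*(r+1) = 2*r+2 by omega,
      show 2*r+1+2 = 2*r+3 by omega, show 2*r+1+1 = 2*r+2 by omega,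
      qb_of_gt (show 2*r+2 < 2*r+3 by omega), qb_self]
    have hs1 : qb (2*r+4) (2*r+3) = qb (2*r+4) 1 := by
      have := qb_symm (show 1 ≤ 2*r+4 by omega)
      rwa [show 2*r+4-1 = 2*r+3 by omega] at this
    have he1 : eq' (r+1+1) (2*r+3) = tq (r+1) := by
      have := eq'_add (r+2) (r+1)
      rwa [show r+2+(r+1) = 2*r+3 by omega, show r+1+1 = r+2 by omega] at this
    have he2 : eq' (r+1) (2*r+2) = tq (r+1) := by
      have := eq'_add (r+1) (r+1)
      rwa [show r+1+(r+1) = 2*r+2 by omega] at this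
    have he3 : eq' (r+1) (2*r+1) = tq r := by
      have := eq'_add (r+1) r
      rwa [show r+1+r = 2*r+1 by omega] at this
    have hs2 : qb (2*r+2) (2*r+1) = qb (2*r+2) 1 := by
      have := qb_symm (show 1 ≤ 2*r+2 by omega)
      rwa [show 2*r+2-1 = 2*r+1 by omega] at this
    rw [hs1, hs2, he1, he2, he3, c1]
    have hp : (X:Aq)^(r+1+1) * X^(tq r) = X * X^(tq (r+1)) := by
      rw [← pow_add, show (r+1+1) + tq r = 1 + tq (r+1) by have := tq_succ r; omega,
        pow_add, pow_one]
    linear_combination (-(qb (2*r+2) 1)) * hp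
  · rcases eq_or_lt_of_le (show 2*n+2 ≤ k+2 by omega) with h2 | h2
    · have hk : k = 2*n := by omega
      subst hk
      rw [cq, cq, cq, cq, show 2*(n+1) = 2*n+2 by omega, qb_self,
        qb_of_gt (show 2*n < 2*n+2 by omega), qb_of_gt (show 2*n < 2*n+1 by omega), qb_self]
      have he1 : eq' (n+1) (2*n+2) = tq (n+1) := by
        have := eq'_add (n+1) (n+1)
        rwa [show n+1+(n+1) = 2*n+2 by omega] at this
      have he2 : eq' n (2*n) = tq n := by
        have := eq'_add n n; rwa [show n+n = 2*n by omega] at this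
      rw [he1, he2, show tq (n+1) = (n+1) + tq n from by have := tq_succ n; omega, pow_add]
      ring
    · rw [cq_of_gt (show 2*(n+1) < k+2 by omega), cq_of_gt (show 2*n < k+2 by omega),
        cq_of_gt (show 2*n < k+1 by omega), cq_of_gt (show 2*n < k by omega)]
      ring

def Tq (n : ℕ) : Aq := ∑ k ∈ Finset.range (2*n+1), (-1:Aq)^k * cq n k
def Sq (n : ℕ) : Aq := ∑ k ∈ Finset.range (2*n+1), ((-1:Aq)^k * (k:Aq)) * cq n k

lemma Tq_ext (n : ℕ) : ∑ k ∈ Finset.range (2*n+3), (-1:Aq)^k * cq n k = Tq n := by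
  rw [Finset.sum_range_succ, Finset.sum_range_succ,
    cq_of_gt (show 2*n < 2*n+1 by omega), cq_of_gt (show 2*n < 2*n+2 by omega)]
  simp [Tq]

lemma Tq_ext' (n : ℕ) : ∑ k ∈ Finset.range (2*n+2), (-1:Aq)^k * cq n k = Tq n := by
  rw [Finset.sum_range_succ, cq_of_gt (show 2*n < 2*n+1 by omega)]
  simp [Tq]

lemma Sq_ext (n : ℕ) : ∑ k ∈ Finset.range (2*n+3), ((-1:Aq)^k * (k:Aq)) * cq n k = Sq n := by
  rw [Finset.sum_range_succ, Finset.sum_range_succ,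
    cq_of_gt (show 2*n < 2*n+1 by omega), cq_of_gt (show 2*n < 2*n+2 by omega)]
  simp [Sq]

lemma Sq_ext' (n : ℕ) : ∑ k ∈ Finset.range (2*n+2), ((-1:Aq)^k * (k:Aq)) * cq n k = Sq n := by
  rw [Finset.sum_range_succ, cq_of_gt (show 2*n < 2*n+1 by omega)]
  simp [Sq]

lemma STq_ext' (n : ℕ) : ∑ k ∈ Finset.range (2*n+2), ((-1:Aq)^k * ((k:Aq)+1)) * cq n k
    = Sq n + Tq n := by
  rw [← Sq_ext' n, ← Tq_ext' n, ← Finset.sum_add_distrib]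
  apply Finset.sum_congr rfl
  intro k _
  ring

lemma hU2 (n : ℕ) : ∑ k ∈ Finset.range (2*n+1), (-1:Aq)^k * cq n (k+2)
    = Tq n - cq n 0 + cq n 1 := by
  have h := Tq_ext n
  rw [Finset.sum_range_succ', Finset.sum_range_succ'] at h
  have : ∀ k : ℕ, (-1:Aq)^(k+1+1) = (-1)^k := by
    intro k; rw [pow_succ, pow_succ]; ring
  rw [Finset.sum_congr rfl (fun k _ => by rw [this k])] at h
  simp only [pow_zero, one_mul, pow_one] at h
  -- h : ∑ k in range (2n+1), (-1)^k * cq n (k+1+1) + (-1) * cq n (0+1) + cq n 0 = Tq n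
  have h2 : ∑ k ∈ Finset.range (2*n+1), (-1:Aq)^k * cq n (k+2)
      = ∑ k ∈ Finset.range (2*n+1), (-1:Aq)^k * cq n (k+1+1) := by
    apply Finset.sum_congr rfl; intro k _; norm_num
  rw [h2]
  simp only [Nat.zero_add] at h
  linear_combination h

lemma hU1 (n : ℕ) : ∑ k ∈ Finset.range (2*n+1), (-1:Aq)^k * cq n (k+1)
    = cq n 0 - Tq n := by
  have h := Tq_ext' n
  rw [Finset.sum_range_succ'] at h
  simp only [pow_zero, one_mul, pow_succ] at h
  have h2 : ∑ k ∈ Finset.range (2*n+1), (-1:Aq)^k * cq n (k+1)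
      = - ∑ k ∈ Finset.range (2*n+1), ((-1:Aq)^k * (-1)) * cq n (k+1) := by
    rw [← Finset.sum_neg_distrib]
    apply Finset.sum_congr rfl; intro k _; ring
  rw [h2]
  linear_combination -h

lemma hV2 (n : ℕ) : ∑ k ∈ Finset.range (2*n+1), ((-1:Aq)^k * ((k:Aq)+2)) * cq n (k+2)
    = Sq n + cq n 1 := by
  have h := Sq_ext n
  rw [Finset.sum_range_succ', Finset.sum_range_succ'] at h
  simp only [Nat.cast_zero, mul_zero, zero_mul, add_zero, Nat.zero_add, Nat.cast_one,
    mul_one, pow_one] at h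
  have h2 : ∑ k ∈ Finset.range (2*n+1), ((-1:Aq)^k * ((k:Aq)+2)) * cq n (k+2)
      = ∑ k ∈ Finset.range (2*n+1), ((-1:Aq)^(k+1+1) * ((k+1+1 : ℕ):Aq)) * cq n (k+1+1) := by
    apply Finset.sum_congr rfl; intro k _
    have : ((-1:Aq))^(k+1+1) = (-1)^k := by rw [pow_succ, pow_succ]; ring
    rw [this]
    push_cast
    ring
  rw [h2]
  linear_combination h

lemma hV1 (n : ℕ) : ∑ k ∈ Finset.range (2*n+1), ((-1:Aq)^k * ((k:Aq)+2)) * cq n (k+1)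
    = cq n 0 - Sq n - Tq n := by
  have h := STq_ext' n
  rw [Finset.sum_range_succ'] at h
  simp only [Nat.cast_zero, zero_add, mul_one, pow_zero, one_mul, Nat.zero_add] at h
  have h2 : ∑ k ∈ Finset.range (2*n+1), ((-1:Aq)^k * ((k:Aq)+2)) * cq n (k+1)
      = - ∑ k ∈ Finset.range (2*n+1), ((-1:Aq)^(k+1) * (((k+1 : ℕ):Aq)+1)) * cq n (k+1) := by
    rw [← Finset.sum_neg_distrib]
    apply Finset.sum_congr rfl; intro k _
    have : ((-1:Aq))^(k+1) = -(-1)^k := by rw [pow_succ]; ring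
    rw [this]
    push_cast
    ring
  rw [h2]
  linear_combination -h

lemma hV0 (n : ℕ) : ∑ k ∈ Finset.range (2*n+1), ((-1:Aq)^k * ((k:Aq)+2)) * cq n k
    = Sq n + 2 * Tq n := by
  rw [Sq, Tq, Finset.mul_sum, ← Finset.sum_add_distrib]
  apply Finset.sum_congr rfl; intro k _
  ring

lemma hU2' (n : ℕ) : ∑ k ∈ Finset.range (2*n+3), (-1:Aq)^k * cq n (k+2)
    = Tq n - cq n 0 + cq n 1 := by
  rw [Finset.sum_range_succ, Finset.sum_range_succ,
    cq_of_gt (show 2*n < 2*n+1+2 by omega), cq_of_gt (show 2*n < 2*n+2+2 by omega)]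
  simp only [mul_zero, add_zero]
  exact hU2 n

lemma hU1' (n : ℕ) : ∑ k ∈ Finset.range (2*n+3), (-1:Aq)^k * cq n (k+1)
    = cq n 0 - Tq n := by
  rw [Finset.sum_range_succ, Finset.sum_range_succ,
    cq_of_gt (show 2*n < 2*n+1+1 by omega), cq_of_gt (show 2*n < 2*n+2+1 by omega)]
  simp only [mul_zero, add_zero]
  exact hU1 n

lemma Tq_ext3 (n : ℕ) : ∑ k ∈ Finset.range (2*n+3), (-1:Aq)^k * cq n k = Tq n := Tq_ext n

lemma hV2' (n : ℕ) : ∑ k ∈ Finset.range (2*n+3), ((-1:Aq)^k * ((k:Aq)+2)) * cq n (k+2)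
    = Sq n + cq n 1 := by
  rw [Finset.sum_range_succ, Finset.sum_range_succ,
    cq_of_gt (show 2*n < 2*n+1+2 by omega), cq_of_gt (show 2*n < 2*n+2+2 by omega)]
  simp only [mul_zero, add_zero]
  exact hV2 n

lemma hV1' (n : ℕ) : ∑ k ∈ Finset.range (2*n+3), ((-1:Aq)^k * ((k:Aq)+2)) * cq n (k+1)
    = cq n 0 - Sq n - Tq n := by
  rw [Finset.sum_range_succ, Finset.sum_range_succ,
    cq_of_gt (show 2*n < 2*n+1+1 by omega), cq_of_gt (show 2*n < 2*n+2+1 by omega)]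
  simp only [mul_zero, add_zero]
  exact hV1 n

lemma hV0' (n : ℕ) : ∑ k ∈ Finset.range (2*n+3), ((-1:Aq)^k * ((k:Aq)+2)) * cq n k
    = Sq n + 2 * Tq n := by
  rw [Finset.sum_range_succ, Finset.sum_range_succ,
    cq_of_gt (show 2*n < 2*n+1 by omega), cq_of_gt (show 2*n < 2*n+2 by omega)]
  simp only [mul_zero, add_zero]
  exact hV0 n

lemma Trec (n : ℕ) : Tq (n+1) = -((1 - X^n) * (1 - X^(n+1))) * Tq n := by
  have h0 := hU2 (n+1)
  rw [show 2*(n+1)+1 = 2*n+3 by omega] at h0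
  have hsum : ∑ k ∈ Finset.range (2*n+3), (-1:Aq)^k * cq (n+1) (k+2)
      = X^n * (Tq n - cq n 0 + cq n 1) + (1+X^(2*n+1)) * (cq n 0 - Tq n) + X^(n+1) * Tq n := by
    rw [← hU2' n, ← hU1' n, ← Tq_ext3 n, Finset.mul_sum, Finset.mul_sum, Finset.mul_sum,
      ← Finset.sum_add_distrib, ← Finset.sum_add_distrib]
    apply Finset.sum_congr rfl; intro k _
    rw [step2]
    ring
  rw [hsum] at h0
  have h1 := step0 n
  have h2 := step1 n
  linear_combination -h0 + h1 - h2

lemma Srec (n : ℕ) : Sq (n+1) = -((1 - X^n) * (1 - X^(n+1))) * Sq n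
    + (2*X^(n+1) - 1 - X^(2*n+1)) * Tq n := by
  have h0 := hV2 (n+1)
  rw [show 2*(n+1)+1 = 2*n+3 by omega] at h0
  have hsum : ∑ k ∈ Finset.range (2*n+3), ((-1:Aq)^k * ((k:Aq)+2)) * cq (n+1) (k+2)
      = X^n * (Sq n + cq n 1) + (1+X^(2*n+1)) * (cq n 0 - Sq n - Tq n)
        + X^(n+1) * (Sq n + 2 * Tq n) := by
    rw [← hV2' n, ← hV1' n, ← hV0' n, Finset.mul_sum, Finset.mul_sum, Finset.mul_sum,
      ← Finset.sum_add_distrib, ← Finset.sum_add_distrib]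
    apply Finset.sum_congr rfl; intro k _
    rw [step2]
    ring
  rw [hsum] at h0
  have h2 := step1 n
  linear_combination -h0 - h2

lemma Tq_succ_zero (n : ℕ) : Tq (n+1) = 0 := by
  induction n with
  | zero => rw [Trec 0]; simp
  | succ r ih => rw [Trec (r+1), ih, mul_zero]

lemma Sq_one : Sq 1 = X - 1 := by
  have h1 : eq' 1 1 = 0 := by simp [eq', tq]
  have h2 : eq' 1 2 = 1 := by simp [eq', tq, Finset.sum_range_succ]
  rw [Sq, Finset.sum_range_succ, Finset.sum_range_succ, Finset.sum_range_succ,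
    Finset.range_zero, Finset.sum_empty, cq, cq, cq, show (2*1 : ℕ) = 2 by norm_num,
    h1, h2, qb_two_one, qb_self]
  push_cast
  ring

lemma Sq_val (r : ℕ) : Sq (r+1) = (-1:Aq)^(r+1) * (Pq (r+1) * Pq r) := by
  induction r with
  | zero =>
      rw [Sq_one, Pq_succ 0, Pq_zero]
      ring
  | succ s ih =>
      rw [Srec (s+1), ih, Tq_succ_zero s, mul_zero, add_zero, Pq_succ (s+1), Pq_succ s]
      ring

lemma prod_sub_one_dvd (c : ℕ) (s : Finset ℕ) (h : ∀ j ∈ s, c ≤ j + 1) :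
    (X:Aq)^c ∣ (∏ j ∈ s, (1 - (X:Aq)^(j+1))) - 1 := by
  induction s using Finset.cons_induction with
  | empty => simp
  | cons a s ha ih =>
      rw [Finset.prod_cons]
      have hr := ih (fun j hj => h j (Finset.mem_cons.mpr (Or.inr hj)))
      have ha' : (X:Aq)^c ∣ (X:Aq)^(a+1) := pow_dvd_pow X (h a (Finset.mem_cons.mpr (Or.inl rfl)))
      have hre : (1 - (X:Aq)^(a+1)) * (∏ j ∈ s, (1 - (X:Aq)^(j+1))) - 1
          = ((∏ j ∈ s, (1 - (X:Aq)^(j+1))) - 1) - X^(a+1) * (∏ j ∈ s, (1 - (X:Aq)^(j+1))) := by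
        ring
      rw [hre]
      exact dvd_sub hr (ha'.mul_right _)

lemma Pdiff {a b : ℕ} (h : a ≤ b) : (X:Aq)^(a+1) ∣ Pq b - Pq a := by
  have hs : Pq b = Pq a * ∏ j ∈ Finset.Ico a b, (1 - X^(j+1)) := by
    rw [Pq, Pq, Finset.prod_range_mul_prod_Ico _ h]
  have : Pq b - Pq a = Pq a * ((∏ j ∈ Finset.Ico a b, (1 - X^(j+1))) - 1) := by
    rw [hs]; ring
  rw [this]
  exact Dvd.dvd.mul_left (prod_sub_one_dvd _ _ (fun j hj => by
    have := Finset.mem_Ico.mp hj; omega)) _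

lemma Pcong {c a b : ℕ} (ha : c ≤ a + 1) (hb : c ≤ b + 1) : (X:Aq)^c ∣ Pq a - Pq b := by
  rcases le_total a b with h | h
  · have := Pdiff h
    have h2 : (X:Aq)^c ∣ Pq b - Pq a := dvd_trans (pow_dvd_pow X ha) this
    have h3 : Pq a - Pq b = -(Pq b - Pq a) := by ring
    rw [h3]
    exact dvd_neg.mpr h2
  · exact dvd_trans (pow_dvd_pow X hb) (Pdiff h)

lemma window (d n k : ℕ) (hk : k ≤ 2*n) (h1 : d ≤ k) (h2 : d ≤ n) (h3 : d ≤ 2*n - k) :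
    (X:Aq)^(d+1) ∣ Pq n * qb (2*n) k - 1 := by
  set w : Aq := ((Uq k)⁻¹ : Aqˣ) * ((Uq (2*n - k))⁻¹ : Aqˣ) with hwdef
  have hw : w * (Pq k * Pq (2*n - k)) = 1 := by
    rw [hwdef, ← Uq_val, ← Uq_val]
    calc ((Uq k)⁻¹ : Aqˣ) * (((Uq (2*n-k))⁻¹ : Aqˣ) : Aq) * ((Uq k : Aq) * (Uq (2*n-k) : Aq))
        = ((((Uq k)⁻¹ : Aqˣ) : Aq) * (Uq k : Aq)) * ((((Uq (2*n-k))⁻¹ : Aqˣ) : Aq) * (Uq (2*n-k) : Aq)) := by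
          ring
      _ = 1 := by rw [Units.inv_mul, Units.inv_mul, mul_one]
  have hqb : qb (2*n) k = Pq (2*n) * w := by
    rw [qb, if_pos hk, Uq_val, hwdef]; ring
  have key : Pq n * qb (2*n) k - 1 = w * (Pq n * Pq (2*n) - Pq k * Pq (2*n - k)) := by
    rw [hqb]; linear_combination hw
  rw [key]
  apply Dvd.dvd.mul_left
  have hsplit : Pq n * Pq (2*n) - Pq k * Pq (2*n - k)
      = (Pq n - Pq k) * Pq (2*n) + Pq k * (Pq (2*n) - Pq (2*n - k)) := by ring
  rw [hsplit]
  exact dvd_add (Dvd.dvd.mul_right (Pcong (by omega) (by omega)) _)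
    (Dvd.dvd.mul_left (Pcong (by omega) (by omega)) _)

lemma neg_one_pow_even (m : ℕ) : ((-1:Aq))^(2*m) = 1 := by
  rw [pow_mul]; norm_num

lemma pairing (m : ℕ) :
    ∑ k ∈ Finset.range (2*(2*m)+1), ((-1:Aq)^k * (k:Aq)) * X^(eq' (2*m) k)
      = (∑ j ∈ Finset.range (2*m), (PowerSeries.C (R := ℤ) ((-1)^j * (2*(j:ℤ)+1))) * X^(tq j))
        + (2*(2*(m:Aq))) * X^(tq (2*m)) := by
  rw [Finset.sum_range_succ]
  have hlast : ((-1:Aq)^(2*(2*m)) * ((2*(2*m) : ℕ):Aq)) * X^(eq' (2*m) (2*(2*m)))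
      = (2*(2*(m:Aq))) * X^(tq (2*m)) := by
    have he : eq' (2*m) (2*(2*m)) = tq (2*m) := by
      have := eq'_add (2*m) (2*m)
      rwa [show 2*m + 2*m = 2*(2*m) by omega] at this
    rw [he, neg_one_pow_even (2*m)]
    push_cast
    ring
  rw [hlast]
  congr 1
  rw [show 2*(2*m) = 2*m + 2*m by omega, Finset.sum_range_add]
  have hrefl := Finset.sum_range_reflect
    (fun k => ((-1:Aq)^k * (k:Aq)) * X^(eq' (2*m) k)) (2*m)
  rw [← hrefl, ← Finset.sum_add_distrib]
  apply Finset.sum_congr rfl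
  intro j hj
  have hjn : j + 1 ≤ 2*m := Finset.mem_range.mp hj
  have he1 : eq' (2*m) (2*m - 1 - j) = tq j := eq'_sub (2*m) j hjn
  have he2 : eq' (2*m) (2*m + j) = tq j := eq'_add (2*m) j
  have hs1 : ((-1:Aq))^(2*m+j) = (-1)^j := by
    rw [pow_add, neg_one_pow_even m, one_mul]
  have hs2 : ((-1:Aq))^(2*m-1-j) = -((-1:Aq))^j := by
    have hone : ((-1:Aq))^(2*m-1-j) * (-1)^(j+1) = 1 := by
      rw [← pow_add, show 2*m-1-j+(j+1) = 2*m by omega, neg_one_pow_even m]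
    have h2 : ((-1:Aq))^(j+1) * ((-1:Aq))^(j+1) = 1 := by
      rw [← pow_add, show (j+1)+(j+1) = 2*(j+1) by omega, neg_one_pow_even (j+1)]
    calc ((-1:Aq))^(2*m-1-j) = (-1)^(2*m-1-j) * ((-1)^(j+1) * (-1)^(j+1)) := by
          rw [h2, mul_one]
      _ = ((-1)^(2*m-1-j) * (-1)^(j+1)) * (-1)^(j+1) := by ring
      _ = (-1)^(j+1) := by rw [hone, one_mul]
      _ = -((-1:Aq))^j := by rw [pow_succ]; ring
  have hc : ((2*m-1-j : ℕ) : Aq) = (2*(m:Aq)) - 1 - (j:Aq) := by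
    rw [show 2*m-1-j = 2*m - (j+1) by omega, Nat.cast_sub (by omega)]
    push_cast
    ring
  have hC : (PowerSeries.C (R := ℤ) ((-1)^j * (2*(j:ℤ)+1)) : Aq) = (-1:Aq)^j * (2*(j:Aq)+1) := by
    rw [map_mul, map_pow, map_neg, map_one, map_add, map_mul, map_one, map_natCast]
    norm_num
  rw [he1, he2, hs1, hs2, hc, hC]
  push_cast
  ring

end

open scoped Classical

/-- The right-hand side of Jacobi's identity:
`∑ (-1)^k (2k+1) q^{k(k+1)/2}` as a formal power series over `ℤ`. -/
noncomputable def jacobiRHS : PowerSeries ℤ :=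
  PowerSeries.mk fun i =>
    if h : ∃ k : ℕ, k * (k + 1) / 2 = i then
      (-1 : ℤ) ^ (Nat.find h) * (2 * (Nat.find h) + 1)
    else 0

/-- Jacobi's identity `∏ (1 - qⁿ)³ = ∑ (-1)ᵏ(2k+1) q^{k(k+1)/2}` as formal power
series: every coefficient of a sufficiently large finite partial product of the
left-hand side agrees with the corresponding coefficient of the right-hand side. -/
theorem stmt_17 :
    ∀ n N : ℕ, n < N →
      PowerSeries.coeff (R := ℤ) n
          (∏ m ∈ Finset.range N, (1 - PowerSeries.X ^ (m + 1)) ^ 3) =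
        PowerSeries.coeff (R := ℤ) n jacobiRHS := by
  intro d N hdN
  have hprod : (∏ m ∈ Finset.range N, (1 - (PowerSeries.X : Aq)^(m+1))^3) = Pq N ^ 3 := by
    rw [Pq, ← Finset.prod_pow]
  rw [hprod]
  have hSval : Sq (2*d+2) = Pq (2*d+2) * Pq (2*d+1) := by
    have h := Sq_val (2*d+1)
    rw [show 2*d+1+1 = 2*d+2 by omega] at h
    rw [h, show ((-1:Aq))^(2*d+2) = 1 from by
      rw [show 2*d+2 = 2*(d+1) by omega]; exact neg_one_pow_even (d+1), one_mul]
  have hstep1 : (X:Aq)^(d+1) ∣ Pq N ^ 3 - Pq (2*d+2) * Sq (2*d+2) := by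
    rw [hSval]
    have hns : Pq N^3 - Pq (2*d+2) * (Pq (2*d+2) * Pq (2*d+1))
        = (Pq N - Pq (2*d+2)) * (Pq N^2 + Pq N * Pq (2*d+2))
          + (Pq N - Pq (2*d+1)) * (Pq (2*d+2))^2 := by ring
    rw [hns]
    exact dvd_add ((Pcong (by omega) (by omega)).mul_right _)
      ((Pcong (by omega) (by omega)).mul_right _)
  have hmulsum : Pq (2*d+2) * Sq (2*d+2)
      = ∑ k ∈ Finset.range (2*(2*d+2)+1), ((-1:Aq)^k * (k:Aq)) * (Pq (2*d+2) * cq (2*d+2) k) := by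
    rw [Sq, Finset.mul_sum]
    apply Finset.sum_congr rfl
    intro k _
    ring
  have hstep2 : (X:Aq)^(d+1) ∣ Pq (2*d+2) * Sq (2*d+2)
      - ∑ k ∈ Finset.range (2*(2*d+2)+1), ((-1:Aq)^k * (k:Aq)) * X^(eq' (2*d+2) k) := by
    rw [hmulsum, ← Finset.sum_sub_distrib]
    apply Finset.dvd_sum
    intro k hk
    have hk' : k ≤ 2*(2*d+2) := by have := Finset.mem_range.mp hk; omega
    have hterm : ((-1:Aq)^k * (k:Aq)) * (Pq (2*d+2) * cq (2*d+2) k)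
          - ((-1:Aq)^k * (k:Aq)) * X^(eq' (2*d+2) k)
        = (((-1:Aq)^k * (k:Aq)) * X^(eq' (2*d+2) k)) * (Pq (2*d+2) * qb (2*(2*d+2)) k - 1) := by
      rw [cq]; ring
    rw [hterm]
    by_cases he : eq' (2*d+2) k ≤ d
    · apply Dvd.dvd.mul_left
      apply window d (2*d+2) k hk'
      · by_cases hnk : 2*d+2 ≤ k
        · omega
        · rw [eq', if_neg hnk] at he
          have := tq_ge (2*d+2 - k - 1)
          omega
      · omega
      · by_cases hnk : 2*d+2 ≤ k
        · rw [eq', if_pos hnk] at he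
          have := tq_ge (k - (2*d+2))
          omega
        · omega
    · have hdd : (X:Aq)^(d+1) ∣ (X:Aq)^(eq' (2*d+2) k) := pow_dvd_pow X (by omega)
      exact (hdd.mul_left _).mul_right _
  have hstep3 : (X:Aq)^(d+1) ∣ (∑ k ∈ Finset.range (2*(2*d+2)+1), ((-1:Aq)^k * (k:Aq)) * X^(eq' (2*d+2) k))
      - ∑ j ∈ Finset.range (2*d+2), (PowerSeries.C (R := ℤ) ((-1)^j * (2*(j:ℤ)+1))) * X^(tq j) := by
    have hpair := pairing (d+1)
    rw [show 2*(d+1) = 2*d+2 by omega] at hpair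
    rw [hpair]
    have hre : (∑ j ∈ Finset.range (2*d+2), (PowerSeries.C (R := ℤ) ((-1)^j * (2*(j:ℤ)+1))) * X^(tq j))
          + (2*(2*((d:Aq)+1))) * X^(tq (2*d+2))
          - ∑ j ∈ Finset.range (2*d+2), (PowerSeries.C (R := ℤ) ((-1)^j * (2*(j:ℤ)+1))) * X^(tq j)
        = (2*(2*((d:Aq)+1))) * X^(tq (2*d+2)) := by ring
    have hcast : ((d:Aq)+1) = ((d+1 : ℕ):Aq) := by push_cast; ring
    rw [hcast] at hre
    rw [hre]
    have htn : d + 1 ≤ tq (2*d+2) := by have := tq_ge (2*d+2); omega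
    exact (pow_dvd_pow X htn).mul_left _
  have hfinal : (X:Aq)^(d+1) ∣ Pq N ^3 - ∑ j ∈ Finset.range (2*d+2),
      (PowerSeries.C (R := ℤ) ((-1)^j * (2*(j:ℤ)+1))) * X^(tq j) := by
    have h := dvd_add (dvd_add hstep1 hstep2) hstep3
    have hre : Pq N^3 - Pq (2*d+2) * Sq (2*d+2)
        + (Pq (2*d+2) * Sq (2*d+2) - ∑ k ∈ Finset.range (2*(2*d+2)+1), ((-1:Aq)^k * (k:Aq)) * X^(eq' (2*d+2) k))
        + ((∑ k ∈ Finset.range (2*(2*d+2)+1), ((-1:Aq)^k * (k:Aq)) * X^(eq' (2*d+2) k))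
          - ∑ j ∈ Finset.range (2*d+2), (PowerSeries.C (R := ℤ) ((-1)^j * (2*(j:ℤ)+1))) * X^(tq j))
        = Pq N^3 - ∑ j ∈ Finset.range (2*d+2), (PowerSeries.C (R := ℤ) ((-1)^j * (2*(j:ℤ)+1))) * X^(tq j) := by
      ring
    rwa [hre] at h
  have hco : PowerSeries.coeff (R := ℤ) d (Pq N ^ 3)
      = PowerSeries.coeff (R := ℤ) d (∑ j ∈ Finset.range (2*d+2),
          (PowerSeries.C (R := ℤ) ((-1)^j * (2*(j:ℤ)+1))) * X^(tq j)) := by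
    have h0 := (PowerSeries.X_pow_dvd_iff.mp hfinal) d (by omega)
    rw [map_sub] at h0
    exact sub_eq_zero.mp h0
  rw [hco, map_sum]
  simp only [jacobiRHS, PowerSeries.coeff_mk]
  by_cases h : ∃ k : ℕ, k * (k + 1) / 2 = d
  · rw [dif_pos h]
    have hk0 : Nat.find h * (Nat.find h + 1) / 2 = d := Nat.find_spec h
    have htk0 : tq (Nat.find h) = d := by rw [tq_eq]; exact hk0
    have hklt : Nat.find h < 2*d+2 := by have := tq_ge (Nat.find h); omega
    rw [Finset.sum_eq_single (Nat.find h)]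
    · rw [PowerSeries.coeff_C_mul_X_pow, if_pos htk0.symm]
    · intro b _ hbne
      rw [PowerSeries.coeff_C_mul_X_pow, if_neg]
      intro habs
      exact hbne (tq_strictMono.injective (habs.symm.trans htk0.symm))
    · intro habs
      exact absurd (Finset.mem_range.mpr hklt) habs
  · rw [dif_neg h]
    apply Finset.sum_eq_zero
    intro j _
    rw [PowerSeries.coeff_C_mul_X_pow, if_neg]
    intro habs
    exact h ⟨j, by rw [← tq_eq j, ← habs]⟩
end
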